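/- For a ∈ B_R, the even-index terms are determined by the odd-index terms: a_{2n} = (2n)! Σ_{k=0}^n C(1/2, k) B_{n+k,2k}(x_1,...,x_{n-k+1}) for all n ≥ 1, where x_i = a_{2i-1}/(2i-1)! and C(1/2,k) is the generalized binomial coefficient. -/

import Mathlib

open Finset PowerSeries

variable {R : Type*} [CommRing R] [Algebra ℚ R]

/-- Binomial convolution of sequences. -/
def bconv (a b : ℕ → R) : ℕ → R :=
  fun n => ∑ h ∈ range (n + 1), (n.choose h : R) * a h * b (n - h)

/-- The identity sequence (1,0,0,...). -/
def eseq : ℕ → R := fun n => if n = 0 then 1 else 0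

/-- The alternating sign transform. -/
def alt (a : ℕ → R) : ℕ → R := fun n => (-1) ^ n * a n

/-- Partial ordinary Bell polynomial `B_{n,k}(x₁,x₂,…)`, for a sequence `x` indexed
from 1, defined as the coefficient of `z^n` in `(∑_{m≥1} x_m z^m)^k`. -/
noncomputable def pBell (n k : ℕ) (x : ℕ → R) : R :=
  PowerSeries.coeff (R := R) n ((PowerSeries.mk fun m => if m = 0 then 0 else x m) ^ k)

/-- Generalized binomial coefficient `C(1/2, k)`. -/
def halfChoose (k : ℕ) : ℚ :=
  (∏ j ∈ range k, ((1 : ℚ) / 2 - j)) / k.factorial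

/-! Split the exponential generating function `A` of `a` into its even and odd parts `E` and `O`.
Since `A(-t) = E - O`, the hypothesis `A(t) A(-t) = 1` reads `E² = 1 + O²`; as `E(0) = 1` and `2`
is invertible, `E` is the unique square root `∑ C(1/2,k) O^{2k}` of `1 + O²` with constant term
`1`. Finally `t O(t) = g(t²)` with `g(u) = ∑ xᵢ uⁱ`, so `[t^{2n}] O^{2k} = [u^{n+k}] g^{2k}`. -/

lemma halfChoose_eq_ringChoose (k : ℕ) : halfChoose k = Ring.choose ((1 : ℚ) / 2) k := by
  have hd : (descPochhammer ℤ k).smeval ((1 : ℚ) / 2) = ∏ j ∈ range k, ((1 : ℚ) / 2 - j) := by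
    induction k with
    | zero => simp [Polynomial.smeval_one]
    | succ k ih =>
        rw [descPochhammer_succ_right, Polynomial.smeval_mul, ih, prod_range_succ,
          Polynomial.smeval_sub, Polynomial.smeval_X, Polynomial.smeval_natCast]
        norm_num
  rw [halfChoose, ← hd, Ring.descPochhammer_eq_factorial_smul_choose, nsmul_eq_mul,
    mul_div_cancel_left₀ _ (Nat.cast_ne_zero.mpr k.factorial_ne_zero)]

namespace PowerSeries

section Parity

variable {A : Type*} [CommRing A]

noncomputable def evenPart (f : A⟦X⟧) : A⟦X⟧ :=
  mk fun m => if Even m then coeff m f else 0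

noncomputable def oddPart (f : A⟦X⟧) : A⟦X⟧ :=
  mk fun m => if Even m then 0 else coeff m f

lemma evenPart_add_oddPart (f : A⟦X⟧) : evenPart f + oddPart f = f := by
  ext m
  by_cases hm : Even m <;> simp [evenPart, oddPart, hm]

lemma evenPart_sub_oddPart (f : A⟦X⟧) : evenPart f - oddPart f = rescale (-1) f := by
  ext m
  rcases Nat.even_or_odd m with hm | hm
  · simp [evenPart, oddPart, coeff_rescale, hm, hm.neg_one_pow]
  · simp [evenPart, oddPart, coeff_rescale, Nat.not_even_iff_odd.mpr hm, hm.neg_one_pow]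

lemma sq_evenPart_sub_sq_oddPart (f : A⟦X⟧) :
    evenPart f ^ 2 - oddPart f ^ 2 = f * rescale (-1) f := by
  linear_combination (evenPart f - oddPart f) * evenPart_add_oddPart f +
    f * evenPart_sub_oddPart f

lemma constantCoeff_evenPart (f : A⟦X⟧) : constantCoeff (evenPart f) = constantCoeff f := by
  rw [← coeff_zero_eq_constantCoeff_apply, evenPart, coeff_mk, if_pos Even.zero,
    coeff_zero_eq_constantCoeff_apply]

lemma constantCoeff_oddPart (f : A⟦X⟧) : constantCoeff (oddPart f) = 0 := by
  rw [← coeff_zero_eq_constantCoeff_apply, oddPart, coeff_mk, if_pos Even.zero]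

lemma X_mul_oddPart (f : A⟦X⟧) :
    X * oddPart f =
      expand 2 two_ne_zero (mk fun i => if i = 0 then 0 else coeff (2 * i - 1) f) := by
  ext (_ | m)
  · simp
  · rw [coeff_succ_X_mul, coeff_expand, oddPart, coeff_mk]
    rcases Nat.even_or_odd m with ⟨j, rfl⟩ | ⟨j, rfl⟩
    · have : ¬ 2 ∣ j + j + 1 := by omega
      simp [this]
    · have : 2 ∣ 2 * j + 1 + 1 := ⟨j + 1, by ring⟩
      simp [this, show (2 * j + 1 + 1) / 2 = j + 1 by omega, Nat.mul_add]

lemma coeff_two_mul_evenPart (f : A⟦X⟧) (n : ℕ) :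
    coeff (2 * n) (evenPart f) = coeff (2 * n) f := by
  rw [evenPart, coeff_mk, if_pos (even_two_mul n)]

lemma coeff_two_mul_oddPart_pow (f : A⟦X⟧) (n k : ℕ) :
    coeff (2 * n) (oddPart f ^ (2 * k)) =
      coeff (n + k) ((mk fun i => if i = 0 then 0 else coeff (2 * i - 1) f) ^ (2 * k)) := by
  rw [← coeff_X_pow_mul _ (2 * k), ← mul_pow, X_mul_oddPart, ← map_pow,
    show 2 * n + 2 * k = 2 * (n + k) by ring, coeff_expand_mul]

end Parity

lemma coeff_pow_eq_zero_of_lt {A : Type*} [CommRing A] {g : A⟦X⟧} (hg : constantCoeff g = 0)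
    {m d : ℕ} (h : m < d) : coeff m (g ^ d) = 0 :=
  coeff_of_lt_order m ((Nat.cast_lt.mpr h).trans_le (le_order_pow_of_constantCoeff_eq_zero d hg))

lemma coeff_subst_eq_sum {A B : Type*} [CommRing A] [CommRing B] [Algebra A B] (f : A⟦X⟧)
    {g : B⟦X⟧} (hg : constantCoeff g = 0) (m : ℕ) (s : Finset ℕ)
    (hs : ∀ d ∉ s, coeff m (g ^ d) = 0) :
    coeff m (subst g f) = ∑ d ∈ s, coeff d f • coeff m (g ^ d) := by
  rw [coeff_subst' (HasSubst.of_constantCoeff_zero' hg)]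
  refine finsum_eq_sum_of_support_subset _ fun d hd => ?_
  by_contra hds
  exact hd (by simp [hs d hds])

lemma binomialSeries_half_sq : binomialSeries ℚ ((1 : ℚ) / 2) ^ 2 = 1 + X := by
  rw [sq, ← binomialSeries_add, show (1 / 2 + 1 / 2 : ℚ) = ((1 : ℕ) : ℚ) by norm_num,
    binomialSeries_nat, pow_one]

noncomputable def sqrtOneAdd (g : R⟦X⟧) : R⟦X⟧ :=
  subst g (binomialSeries ℚ ((1 : ℚ) / 2))

section SqrtOneAdd

variable {g : R⟦X⟧}

lemma sq_sqrtOneAdd (hg : constantCoeff g = 0) : sqrtOneAdd g ^ 2 = 1 + g := by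
  have ha := HasSubst.of_constantCoeff_zero' hg
  rw [sqrtOneAdd, ← coe_substAlgHom ha, ← map_pow, binomialSeries_half_sq, map_add, map_one,
    coe_substAlgHom, subst_X ha]

lemma coeff_sqrtOneAdd (hg : constantCoeff g = 0) (m : ℕ) (s : Finset ℕ)
    (hs : ∀ d ∉ s, coeff m (g ^ d) = 0) :
    coeff m (sqrtOneAdd g) = ∑ d ∈ s, algebraMap ℚ R (halfChoose d) * coeff m (g ^ d) := by
  simp [sqrtOneAdd, coeff_subst_eq_sum _ hg m s hs, halfChoose_eq_ringChoose, Algebra.smul_def]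

lemma constantCoeff_sqrtOneAdd (hg : constantCoeff g = 0) : constantCoeff (sqrtOneAdd g) = 1 := by
  rw [← coeff_zero_eq_constantCoeff_apply, coeff_sqrtOneAdd hg 0 {0}
    fun d hd => coeff_pow_eq_zero_of_lt hg (Nat.pos_of_ne_zero (by simpa using hd))]
  simp [halfChoose]

lemma eq_sqrtOneAdd_of_sq_eq (hg : constantCoeff g = 0) {h : R⟦X⟧} (hsq : h ^ 2 = 1 + g)
    (h0 : constantCoeff h = 1) : h = sqrtOneAdd g := by
  have hunit : IsUnit (h + sqrtOneAdd g) := by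
    rw [isUnit_iff_constantCoeff, map_add, h0, constantCoeff_sqrtOneAdd hg, one_add_one_eq_two,
      ← map_ofNat (algebraMap ℚ R)]
    exact (Ne.isUnit two_ne_zero).map _
  refine sub_eq_zero.mp (hunit.mul_left_eq_zero.mp ?_)
  linear_combination hsq - sq_sqrtOneAdd hg

end SqrtOneAdd

end PowerSeries

noncomputable def egf (a : ℕ → R) : R⟦X⟧ :=
  mk fun n => algebraMap ℚ R (1 / n.factorial) * a n

lemma egf_bconv (a b : ℕ → R) : egf (bconv a b) = egf a * egf b := by
  ext n
  simp only [egf, bconv, coeff_mk, coeff_mul, Nat.sum_antidiagonal_eq_sum_range_succ_mk, mul_sum]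
  refine sum_congr rfl fun h hh => ?_
  have hq : (1 / n.factorial : ℚ) * n.choose h = 1 / h.factorial * (1 / (n - h).factorial) := by
    rw [Nat.cast_choose ℚ (Nat.lt_succ_iff.mp (mem_range.mp hh))]
    field_simp
  calc _ = algebraMap ℚ R ((1 / n.factorial : ℚ) * n.choose h) * a h * b (n - h) := by
        rw [map_mul, map_natCast]; ring
    _ = _ := by rw [hq, map_mul]; ring

lemma egf_alt (a : ℕ → R) : egf (alt a) = rescale (-1) (egf a) := by
  ext n
  simp only [egf, alt, coeff_mk, coeff_rescale]
  ring

lemma egf_eseq : egf (eseq : ℕ → R) = 1 := by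
  ext n
  by_cases hn : n = 0 <;> simp [egf, eseq, coeff_one, hn]

/-- For `a ∈ B_R`, the even-indexed terms are determined by the odd-indexed ones:
`a (2n) = (2n)! ∑_{k=0}^n C(1/2,k) B_{n+k,2k}(x)` with `x_i = a (2i-1)/(2i-1)!`. -/
theorem BR_even_terms (a : ℕ → R) (h0 : a 0 = 1) (hBR : bconv a (alt a) = eseq) :
    ∀ n : ℕ, 1 ≤ n →
      a (2 * n) = ((2 * n).factorial : R) *
        ∑ k ∈ range (n + 1),
          algebraMap ℚ R (halfChoose k) *
            pBell (n + k) (2 * k)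
              (fun i => algebraMap ℚ R (1 / (2 * i - 1).factorial) * a (2 * i - 1)) := by
  intro n _
  set O := oddPart (egf a)
  have hO : constantCoeff (O ^ 2) = 0 := by simp [O, constantCoeff_oddPart]
  have hsq : evenPart (egf a) ^ 2 = 1 + O ^ 2 := by
    have h := sq_evenPart_sub_sq_oddPart (egf a)
    rw [← egf_alt, ← egf_bconv, hBR, egf_eseq] at h
    linear_combination h
  have hE := eq_sqrtOneAdd_of_sq_eq hO hsq (by simp [constantCoeff_evenPart, egf, h0])
  have hvanish : ∀ k ∉ range (n + 1), coeff (2 * n) ((O ^ 2) ^ k) = 0 := fun k hk => by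
    rw [← pow_mul]
    exact coeff_pow_eq_zero_of_lt (constantCoeff_oddPart _) (by simp only [mem_range] at hk; omega)
  have hcoeff := congrArg (coeff (2 * n)) hE
  rw [coeff_sqrtOneAdd hO _ _ hvanish] at hcoeff
  simp only [← pow_mul, O, coeff_two_mul_evenPart, coeff_two_mul_oddPart_pow, egf, coeff_mk]
    at hcoeff
  simp only [pBell]
  rw [← hcoeff, ← mul_assoc, ← map_natCast (algebraMap ℚ R), ← map_mul,
    mul_one_div_cancel (by positivity), map_one, one_mul]
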